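/- arXiv:1209.3326 — 2 statements merged into one kernel-verified Lean document; each statement's English description precedes it below -/
import Mathlib

section
/- Let z₁, …, zₙ ∈ ℂ be distinct points with n ≥ 2, and let m ∈ {1, …, n−1}. Let C, C′ and C″ be the Cauchy matrices associated with (z₁,…,zₙ), (z₁,…,z_m) and (z_{m+1},…,zₙ) respectively, and let 𝟏 denote the all-ones vector of the appropriate dimension. Then ⟨CC*𝟏,𝟏⟩ > ⟨C′C′*𝟏,𝟏⟩ + ⟨C″C″*𝟏,𝟏⟩; equivalently, ‖C*𝟏‖² > ‖C′*𝟏‖² + ‖C″*𝟏‖². -/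
/-!
Expanding the square, `‖C*𝟏‖² = ∑_{k,j,l} ⟪(z_j - z_k)⁻¹, (z_l - z_k)⁻¹⟫`, a sum over all triples
of points. The gap between the two sides is the same sum over the triples that meet both blocks.
That set of triples is invariant under cyclic rotation, so the gap is a third of the sum of the
cyclic sums, and for distinct `a, b, c` the cyclic sum is
`2 (Im (conj (b - a) (c - a)))² / (|b - a|² |c - b|² |a - c|²)`, half the squared Menger curvature
of the triangle. It is nonnegative also on degenerate triples and equals `|a - b|⁻²` on `(b, a, a)`
with `a, b` in different blocks.
-/

open Complex Filter Metric Set Topology Bornology MeasureTheory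

noncomputable section

/-- The Cauchy matrix associated with points `z₁, …, zₙ`:
`c_{jk} = 1/(z_j − z_k)` for `j ≠ k` and `c_{jj} = 0`. -/
def cauchyMatrix {n : ℕ} (z : Fin n → ℂ) : Matrix (Fin n) (Fin n) ℂ :=
  fun j k => if j = k then 0 else 1 / (z j - z k)

/-- The quadratic form `⟨CC*𝟏, 𝟏⟩ = ‖C*𝟏‖²` for the Cauchy matrix `C` of `z₁, …, zₙ`,
where `𝟏 = (1, …, 1)`: the `k`-th entry of `C*𝟏` is `Σ_j conj(c_{jk})`. -/
def cauchyQuadForm {n : ℕ} (z : Fin n → ℂ) : ℝ :=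
  ∑ k : Fin n, ‖∑ j : Fin n, (starRingEnd ℂ) (cauchyMatrix z j k)‖ ^ 2

open scoped InnerProductSpace ComplexConjugate

def cauchyKernel (p : ℂ × ℂ × ℂ) : ℝ := ⟪(p.2.1 - p.1)⁻¹, (p.2.2 - p.1)⁻¹⟫_ℝ

-- `‖C*𝟏‖²` for the points of `s`: the term `j = k` is `0⁻¹ = 0`, the zero diagonal of `C`.
def cauchyEnergy (s : Finset ℂ) : ℝ := ∑ k ∈ s, ‖∑ j ∈ s, (j - k)⁻¹‖ ^ 2

def rotateTriple (α : Type*) : α × α × α ≃ α × α × α :=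
  (Equiv.prodComm α (α × α)).trans (Equiv.prodAssoc α α α)

@[simp]
lemma rotateTriple_apply {α : Type*} (a b c : α) : rotateTriple α (a, b, c) = (b, c, a) := rfl

lemma three_mul_sum_eq_sum_rotateTriple {α β : Type*} [CommSemiring β] {M : Finset (α × α × α)}
    (hM : ∀ p, rotateTriple α p ∈ M ↔ p ∈ M) (f : α × α × α → β) :
    3 * ∑ p ∈ M, f p =
      ∑ p ∈ M, (f p + f (rotateTriple α p) + f (rotateTriple α (rotateTriple α p))) := by
  have hrot : ∀ g : α × α × α → β, ∑ p ∈ M, g (rotateTriple α p) = ∑ p ∈ M, g p := fun g =>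
    Finset.sum_equiv (rotateTriple α) (fun p => (hM p).symm) (fun _ _ => rfl)
  have h₁ : ∑ p ∈ M, f (rotateTriple α p) = ∑ p ∈ M, f p := hrot f
  have h₂ : ∑ p ∈ M, f (rotateTriple α (rotateTriple α p)) = ∑ p ∈ M, f p :=
    (hrot fun p => f (rotateTriple α p)).trans h₁
  rw [Finset.sum_add_distrib, Finset.sum_add_distrib, h₁, h₂]
  ring

lemma Complex.real_inner_inv_inv (u v : ℂ) : ⟪u⁻¹, v⁻¹⟫_ℝ = ⟪u, v⟫_ℝ / (normSq u * normSq v) := by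
  simp only [Complex.inner, inv_def, mul_re, mul_im, conj_re, conj_im, ofReal_re, ofReal_im]
  by_cases hu : normSq u = 0
  · simp [hu]
  by_cases hv : normSq v = 0
  · simp [hv]
  field_simp
  ring

lemma cauchyKernel_cyclic_sum {a b c : ℂ} (hab : a ≠ b) (hbc : b ≠ c) (hca : c ≠ a) :
    cauchyKernel (a, b, c) + cauchyKernel (b, c, a) + cauchyKernel (c, a, b) =
      2 * (conj (b - a) * (c - a)).im ^ 2 / (normSq (b - a) * normSq (c - b) * normSq (a - c)) := by
  have h₁ : normSq (b - a) ≠ 0 := by simpa [sub_eq_zero] using hab.symm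
  have h₂ : normSq (c - b) ≠ 0 := by simpa [sub_eq_zero] using hbc.symm
  have h₃ : normSq (a - c) ≠ 0 := by simpa [sub_eq_zero] using hca.symm
  have normSq_sub_comm : ∀ u v : ℂ, normSq (u - v) = normSq (v - u) := fun u v => by
    rw [← normSq_neg, neg_sub]
  simp only [cauchyKernel, Complex.real_inner_inv_inv, normSq_sub_comm c a, normSq_sub_comm a b,
    normSq_sub_comm b c]
  field_simp
  simp only [Complex.inner, normSq_apply, mul_re, mul_im, conj_re, conj_im, sub_re, sub_im]
  ring

lemma cauchyKernel_cyclic_sum_nonneg (a b c : ℂ) :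
    0 ≤ cauchyKernel (a, b, c) + cauchyKernel (b, c, a) + cauchyKernel (c, a, b) := by
  by_cases hab : a = b
  · subst hab; simp [cauchyKernel]
  by_cases hbc : b = c
  · subst hbc; simp [cauchyKernel]
  by_cases hca : c = a
  · subst hca; simp [cauchyKernel]
  rw [cauchyKernel_cyclic_sum hab hbc hca]
  exact div_nonneg (by positivity)
    (mul_nonneg (mul_nonneg (normSq_nonneg _) (normSq_nonneg _)) (normSq_nonneg _))

lemma cauchyKernel_cyclic_sum_pos {a b : ℂ} (hab : a ≠ b) :
    0 < cauchyKernel (b, a, a) + cauchyKernel (a, a, b) + cauchyKernel (a, b, a) := by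
  simp only [cauchyKernel, sub_self, inv_zero, inner_zero_left, inner_zero_right, add_zero]
  exact real_inner_self_pos.2 (by simpa [sub_eq_zero] using hab)

lemma cauchyEnergy_eq_sum_cauchyKernel (s : Finset ℂ) :
    cauchyEnergy s = ∑ p ∈ s ×ˢ s ×ˢ s, cauchyKernel p := by
  simp only [cauchyEnergy, ← real_inner_self_eq_norm_sq, sum_inner, inner_sum, Finset.sum_product,
    cauchyKernel]
  exact Finset.sum_congr rfl fun _ _ => Finset.sum_comm

lemma cauchyEnergy_add_lt_cauchyEnergy_union {s t : Finset ℂ} (hst : Disjoint s t)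
    (hs : s.Nonempty) (ht : t.Nonempty) :
    cauchyEnergy s + cauchyEnergy t < cauchyEnergy (s ∪ t) := by
  set M := (s ∪ t) ×ˢ (s ∪ t) ×ˢ (s ∪ t) \ (s ×ˢ s ×ˢ s ∪ t ×ˢ t ×ˢ t)
  have hsplit :
      cauchyEnergy (s ∪ t) = cauchyEnergy s + cauchyEnergy t + ∑ p ∈ M, cauchyKernel p := by
    have hdisj : Disjoint (s ×ˢ s ×ˢ s) (t ×ˢ t ×ˢ t) := by simp [Finset.disjoint_product, hst]
    have hsub : s ×ˢ s ×ˢ s ∪ t ×ˢ t ×ˢ t ⊆ (s ∪ t) ×ˢ (s ∪ t) ×ˢ (s ∪ t) :=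
      Finset.union_subset (by gcongr <;> simp) (by gcongr <;> simp)
    simp only [cauchyEnergy_eq_sum_cauchyKernel]
    rw [← Finset.sum_union hdisj, add_comm, Finset.sum_sdiff hsub]
  have hM : ∀ p, rotateTriple ℂ p ∈ M ↔ p ∈ M := by
    rintro ⟨a, b, c⟩
    simp only [M, rotateTriple_apply, Finset.mem_sdiff, Finset.mem_union, Finset.mem_product]
    tauto
  obtain ⟨a, ha⟩ := hs
  obtain ⟨b, hb⟩ := ht
  have hmixed : (b, a, a) ∈ M := by
    simp [M, ha, hb, Finset.disjoint_left.1 hst ha, Finset.disjoint_right.1 hst hb]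
  have hpos : 0 < ∑ p ∈ M, cauchyKernel p := by
    refine pos_of_mul_pos_right ?_ zero_le_three
    rw [three_mul_sum_eq_sum_rotateTriple hM]
    exact Finset.sum_pos' (fun ⟨a, b, c⟩ _ => cauchyKernel_cyclic_sum_nonneg a b c)
      ⟨_, hmixed, cauchyKernel_cyclic_sum_pos (Finset.disjoint_left.1 hst ha <| · ▸ hb)⟩
  linarith

lemma cauchyMatrix_apply {n : ℕ} (z : Fin n → ℂ) (j k : Fin n) :
    cauchyMatrix z j k = (z j - z k)⁻¹ := by
  by_cases h : j = k <;> simp [cauchyMatrix, h]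

lemma cauchyQuadForm_eq_cauchyEnergy {n : ℕ} {z : Fin n → ℂ} (hz : Function.Injective z) :
    cauchyQuadForm z = cauchyEnergy (Finset.univ.image z) := by
  simp only [cauchyQuadForm, cauchyEnergy, cauchyMatrix_apply, ← map_sum, norm_conj,
    Finset.sum_image hz.injOn]

lemma Fin.image_castLE_union_image_natAdd {m n : ℕ} (h : m ≤ n) :
    Finset.univ.image (Fin.castLE h) ∪
      Finset.univ.image (fun i : Fin (n - m) => (⟨m + i, by omega⟩ : Fin n)) = Finset.univ := by
  refine Finset.eq_univ_of_forall fun i => ?_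
  simp only [Finset.mem_union, Finset.mem_image, Finset.mem_univ, true_and, Fin.ext_iff,
    Fin.val_castLE]
  by_cases hi : (i : ℕ) < m
  · exact Or.inl ⟨⟨i, hi⟩, rfl⟩
  · exact Or.inr ⟨⟨i - m, by omega⟩, by simp only; omega⟩

lemma Fin.disjoint_image_castLE_image_natAdd {m n : ℕ} (h : m ≤ n) :
    Disjoint (Finset.univ.image (Fin.castLE h))
      (Finset.univ.image (fun i : Fin (n - m) => (⟨m + i, by omega⟩ : Fin n))) := by
  simp only [Finset.disjoint_left, Finset.mem_image, Finset.mem_univ, true_and]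
  rintro _ ⟨i, rfl⟩ ⟨j, hj⟩
  simp only [Fin.ext_iff, Fin.val_castLE] at hj
  omega

/-- For distinct `z₁, …, zₙ` (`n ≥ 2`) and `1 ≤ m ≤ n − 1`, with `C`, `C′`, `C″`
the Cauchy matrices of `(z₁,…,zₙ)`, `(z₁,…,z_m)`, `(z_{m+1},…,zₙ)`:
`⟨CC*𝟏,𝟏⟩ > ⟨C′C′*𝟏,𝟏⟩ + ⟨C″C″*𝟏,𝟏⟩`. -/
theorem cauchyQuadForm_superadditive (n m : ℕ) (hm : 1 ≤ m) (hmn : m < n)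
    (z : Fin n → ℂ) (hz : Function.Injective z) :
    cauchyQuadForm (fun i : Fin m => z (Fin.castLE hmn.le i)) +
      cauchyQuadForm (fun i : Fin (n - m) => z ⟨m + (i : ℕ), by have := i.isLt; omega⟩) <
      cauchyQuadForm z := by
  set shift : Fin (n - m) → Fin n := fun i => ⟨m + i, by omega⟩
  have hshift : Function.Injective shift := fun i j h => by simpa [shift, Fin.ext_iff] using h
  change cauchyQuadForm (z ∘ Fin.castLE hmn.le) + cauchyQuadForm (z ∘ shift) < _
  rw [cauchyQuadForm_eq_cauchyEnergy (hz.comp (Fin.castLE_injective hmn.le)),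
    cauchyQuadForm_eq_cauchyEnergy (hz.comp hshift), cauchyQuadForm_eq_cauchyEnergy hz,
    ← Finset.image_image, ← Finset.image_image,
    ← Fin.image_castLE_union_image_natAdd hmn.le, Finset.image_union]
  exact cauchyEnergy_add_lt_cauchyEnergy_union
    ((Finset.disjoint_image hz).2 (Fin.disjoint_image_castLE_image_natAdd hmn.le))
    ((Finset.univ_nonempty_iff.2 ⟨⟨0, hm⟩⟩).image _ |>.image _)
    ((Finset.univ_nonempty_iff.2 ⟨⟨0, by omega⟩⟩).image _ |>.image _)
end
end

section
/- Let z₁, …, zₙ ∈ ℂ be distinct points and let C be the associated Cauchy matrix. Then ⟨CC*𝟏,𝟏⟩ = Σ_j Σ_{l≠j} 1/|z_j − z_l|² + Σ_{j<k<l} ( 4 S(z_j,z_k,z_l) / (|z_j−z_k| · |z_j−z_l| · |z_k−z_l|) )², where S(z_j,z_k,z_l) denotes the area of the triangle with vertices z_j, z_k, z_l (so the term for a collinear triple is 0). -/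
/-!
Expanding `‖C*𝟏‖²` gives the triple sum `∑_{j,l,k} Re (conj c_{jk} · c_{lk})`. The terms with
`j = l` are `|c_{jk}|² = 1/|z_j − z_k|²`. For `j ≠ l` only pairwise distinct triples contribute,
and collecting the six orderings of `{j, k, l}` gives, by Melnikov's identity, the square of the
Menger curvature `4 S / (|z_j − z_k| |z_j − z_l| |z_k − z_l|)`.
-/

open Complex Filter Metric Set Topology Bornology MeasureTheory

noncomputable section

/-- The area of the triangle with vertices `a`, `b`, `c` in the plane. -/
def triangleArea (a b c : ℂ) : ℝ := |((b - a) * (starRingEnd ℂ) (c - a)).im| / 2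

open Finset

theorem Fintype.sum_sum_eq_sum_add_sum_ne {ι M : Type*} [Fintype ι] [DecidableEq ι]
    [AddCommMonoid M] (g : ι → ι → M) :
    ∑ i, ∑ j, g i j = ∑ i, g i i + ∑ i, ∑ j, if i ≠ j then g i j else 0 := by
  rw [← sum_add_distrib]
  refine Finset.sum_congr rfl fun i _ => ?_
  rw [← add_sum_erase _ _ (mem_univ i), ← sum_filter, filter_ne]

theorem Fintype.sum_sum_sum_eq_sum_lt_lt {ι M : Type*} [Fintype ι] [LinearOrder ι]
    [AddCommMonoid M] (f : ι → ι → ι → M) (hf : ∀ a b c, a = b ∨ a = c ∨ b = c → f a b c = 0) :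
    ∑ a, ∑ b, ∑ c, f a b c = ∑ a, ∑ b, ∑ c,
      if a < b ∧ b < c then f a b c + f a c b + f b a c + f b c a + f c a b + f c b a else 0 := by
  have hsplit : ∀ a b c, f a b c =
      (if a < b ∧ b < c then f a b c else 0) + (if a < c ∧ c < b then f a b c else 0) +
      (if b < a ∧ a < c then f a b c else 0) + (if c < a ∧ a < b then f a b c else 0) +
      (if b < c ∧ c < a then f a b c else 0) + (if c < b ∧ b < a then f a b c else 0) := by
    intro a b c
    by_cases h : a = b ∨ a = c ∨ b = c
    · simp [hf a b c h]
    · obtain ⟨hab, hac, hbc⟩ : a ≠ b ∧ a ≠ c ∧ b ≠ c := by tauto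
      rcases hab.lt_or_gt with hab | hab <;> rcases hac.lt_or_gt with hac | hac <;>
        rcases hbc.lt_or_gt with hbc | hbc <;>
        first | order | simp [hab, hac, hbc, hab.not_gt, hac.not_gt, hbc.not_gt]
  have swap12 (g : ι → ι → ι → M) : ∑ a, ∑ b, ∑ c, g a b c = ∑ a, ∑ b, ∑ c, g b a c :=
    Finset.sum_comm
  have swap23 (g : ι → ι → ι → M) : ∑ a, ∑ b, ∑ c, g a b c = ∑ a, ∑ b, ∑ c, g a c b :=
    Finset.sum_congr rfl fun _ _ => Finset.sum_comm
  have e2 : ∑ a, ∑ b, ∑ c, (if a < c ∧ c < b then f a b c else 0) =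
      ∑ a, ∑ b, ∑ c, (if a < b ∧ b < c then f a c b else 0) := swap23 _
  have e3 : ∑ a, ∑ b, ∑ c, (if b < a ∧ a < c then f a b c else 0) =
      ∑ a, ∑ b, ∑ c, (if a < b ∧ b < c then f b a c else 0) := swap12 _
  have e4 : ∑ a, ∑ b, ∑ c, (if c < a ∧ a < b then f a b c else 0) =
      ∑ a, ∑ b, ∑ c, (if a < b ∧ b < c then f b c a else 0) := (swap23 _).trans (swap12 _)
  have e5 : ∑ a, ∑ b, ∑ c, (if b < c ∧ c < a then f a b c else 0) =
      ∑ a, ∑ b, ∑ c, (if a < b ∧ b < c then f c a b else 0) := (swap12 _).trans (swap23 _)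
  have e6 : ∑ a, ∑ b, ∑ c, (if c < b ∧ b < a then f a b c else 0) =
      ∑ a, ∑ b, ∑ c, (if a < b ∧ b < c then f c b a else 0) :=
    ((swap12 _).trans (swap23 _)).trans (swap12 _)
  rw [Finset.sum_congr rfl fun a _ => Finset.sum_congr rfl fun b _ =>
    Finset.sum_congr rfl fun c _ => hsplit a b c]
  simp only [sum_add_distrib]
  rw [e2, e3, e4, e5, e6]
  simp only [← sum_add_distrib, ite_add_ite, add_zero]

theorem Complex.sq_norm_sum {ι : Type*} (s : Finset ι) (v : ι → ℂ) :
    ‖∑ i ∈ s, v i‖ ^ 2 = ∑ i ∈ s, ∑ j ∈ s, ((starRingEnd ℂ) (v i) * v j).re := by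
  rw [Complex.sq_norm, ← ofReal_re (normSq _), normSq_eq_conj_mul_self, map_sum, sum_mul_sum,
    re_sum]
  simp only [re_sum]

theorem Complex.re_conj_inv_mul_inv (x y : ℂ) :
    ((starRingEnd ℂ) x⁻¹ * y⁻¹).re = (x * (starRingEnd ℂ) y).re / (normSq x * normSq y) := by
  rw [map_inv₀, ← mul_inv, inv_re, normSq_mul, normSq_conj]
  simp [mul_comm]

/-- The reciprocal of the circumradius of the triangle `a b c` (`0` for a degenerate one). -/
def mengerCurvature (a b c : ℂ) : ℝ :=
  4 * triangleArea a b c / (‖a - b‖ * ‖a - c‖ * ‖b - c‖)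

/- Melnikov's identity. With `p = a - c`, `q = b - c` both sides are rational in `|p|²`, `|q|²`
and `p q̄`, and the identity reduces to Lagrange's `|p q̄|² = (Re p q̄)² + (Im p q̄)²`. -/
theorem mengerCurvature_sq {a b c : ℂ} (hab : a ≠ b) (hac : a ≠ c) (hbc : b ≠ c) :
    mengerCurvature a b c ^ 2 =
      2 * (((starRingEnd ℂ) (a - c)⁻¹ * (b - c)⁻¹).re +
        ((starRingEnd ℂ) (a - b)⁻¹ * (c - b)⁻¹).re +
        ((starRingEnd ℂ) (b - a)⁻¹ * (c - a)⁻¹).re) := by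
  have hp : normSq (a - c) ≠ 0 := normSq_eq_zero.not.2 (sub_ne_zero.2 hac)
  have hq : normSq (b - c) ≠ 0 := normSq_eq_zero.not.2 (sub_ne_zero.2 hbc)
  have hpq : normSq (a - b) ≠ 0 := normSq_eq_zero.not.2 (sub_ne_zero.2 hab)
  rw [mengerCurvature, triangleArea, div_pow, mul_pow, mul_pow, mul_pow, div_pow, sq_abs,
    Complex.sq_norm, Complex.sq_norm, Complex.sq_norm, re_conj_inv_mul_inv, re_conj_inv_mul_inv,
    re_conj_inv_mul_inv, show b - a = -(a - b) by ring, show c - a = -(a - c) by ring,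
    show c - b = -(b - c) by ring, normSq_neg, normSq_neg, normSq_neg]
  rw [show a - b = (a - c) - (b - c) by ring] at hpq ⊢
  generalize a - c = p at *
  generalize b - c = q at *
  have hre_q : ((p - q) * (starRingEnd ℂ) (-q)).re = normSq q - (p * (starRingEnd ℂ) q).re := by
    simp only [normSq_apply, mul_re, sub_re, sub_im, conj_re, conj_im, neg_re, neg_im]; ring
  have hre_p : (-(p - q) * (starRingEnd ℂ) (-p)).re = normSq p - (p * (starRingEnd ℂ) q).re := by
    simp only [normSq_apply, mul_re, sub_re, sub_im, conj_re, conj_im, neg_re, neg_im]; ring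
  have him : (-(p - q) * (starRingEnd ℂ) (-p)).im = (p * (starRingEnd ℂ) q).im := by
    simp only [mul_im, sub_re, sub_im, conj_re, conj_im, neg_re, neg_im]; ring
  have hlagrange : (p * (starRingEnd ℂ) q).re ^ 2 + (p * (starRingEnd ℂ) q).im ^ 2 =
      normSq p * normSq q := by
    rw [sq, sq, ← normSq_apply, normSq_mul, normSq_conj]
  rw [hre_q, hre_p, him, normSq_sub] at *
  field_simp
  linear_combination 16 * hlagrange

theorem cauchyQuadForm_eq_sum {n : ℕ} (z : Fin n → ℂ) : cauchyQuadForm z =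
    ∑ j, ∑ l, ∑ k, ((starRingEnd ℂ) (cauchyMatrix z j k) * cauchyMatrix z l k).re := by
  simp only [cauchyQuadForm, ← map_sum, norm_conj, Complex.sq_norm_sum]
  rw [sum_comm]
  exact sum_congr rfl fun _ _ => sum_comm

theorem sum_re_conj_cauchyMatrix_mul_self {n : ℕ} (z : Fin n → ℂ) (j : Fin n) :
    ∑ k, ((starRingEnd ℂ) (cauchyMatrix z j k) * cauchyMatrix z j k).re =
      ∑ l ∈ univ.filter (fun l => l ≠ j), 1 / ‖z j - z l‖ ^ 2 := by
  rw [sum_filter]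
  refine sum_congr rfl fun k _ => ?_
  rw [← normSq_eq_conj_mul_self, ofReal_re, normSq_eq_norm_sq, cauchyMatrix]
  rcases eq_or_ne j k with rfl | hjk
  · simp
  · rw [if_neg hjk, if_pos hjk.symm, norm_div, norm_one, div_pow, one_pow]

theorem sum_offDiag_re_conj_cauchyMatrix_mul {n : ℕ} {z : Fin n → ℂ}
    (hz : Function.Injective z) :
    ∑ j, ∑ l, ∑ k, (if j ≠ l then
        ((starRingEnd ℂ) (cauchyMatrix z j k) * cauchyMatrix z l k).re else 0) =
      ∑ j, ∑ k, ∑ l, if j < k ∧ k < l then mengerCurvature (z j) (z k) (z l) ^ 2 else 0 := by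
  set T : Fin n → Fin n → Fin n → ℝ := fun j l k =>
    if j ≠ l then ((starRingEnd ℂ) (cauchyMatrix z j k) * cauchyMatrix z l k).re else 0
  have hT_eq_zero : ∀ a b c, a = b ∨ a = c ∨ b = c → T a b c = 0 := by
    rintro a b c (rfl | rfl | rfl) <;> simp [T, cauchyMatrix]
  have hT_comm : ∀ a b c, T a b c = T b a c := by
    intro a b c
    simp only [T, ne_comm]
    split_ifs
    · rw [← conj_re, map_mul, conj_conj, mul_comm]
    · rfl
  rw [Fintype.sum_sum_sum_eq_sum_lt_lt T hT_eq_zero]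
  refine sum_congr rfl fun a _ => sum_congr rfl fun b _ => sum_congr rfl fun c _ => ?_
  split_ifs with h
  swap
  · rfl
  obtain ⟨hab, hbc⟩ := h
  have hac := hab.trans hbc
  rw [hT_comm b a c, hT_comm c a b, hT_comm c b a,
    mengerCurvature_sq (hz.ne hab.ne) (hz.ne hac.ne) (hz.ne hbc.ne)]
  simp only [T, cauchyMatrix, hab.ne, hac.ne, hbc.ne, hab.ne', hac.ne', hbc.ne', ne_eq,
    not_false_eq_true, if_true, if_false, one_div]
  ring

/-- For distinct points `z₁, …, zₙ` with Cauchy matrix `C`: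
`⟨CC*𝟏,𝟏⟩ = Σ_j Σ_{l≠j} 1/|z_j−z_l|² +
Σ_{j<k<l} (4 S(z_j,z_k,z_l)/(|z_j−z_k||z_j−z_l||z_k−z_l|))²`. -/
theorem cauchyQuadForm_formula (n : ℕ) (z : Fin n → ℂ) (hz : Function.Injective z) :
    cauchyQuadForm z =
      (∑ j : Fin n, ∑ l ∈ Finset.univ.filter (fun l : Fin n => l ≠ j),
        1 / ‖z j - z l‖ ^ 2) +
      ∑ j : Fin n, ∑ k : Fin n, ∑ l : Fin n,
        if j < k ∧ k < l then
          (4 * triangleArea (z j) (z k) (z l) /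
            (‖z j - z k‖ * ‖z j - z l‖ * ‖z k - z l‖)) ^ 2
        else 0 := by
  rw [cauchyQuadForm_eq_sum, Fintype.sum_sum_eq_sum_add_sum_ne]
  simp only [sum_re_conj_cauchyMatrix_mul_self, ite_sum_zero,
    sum_offDiag_re_conj_cauchyMatrix_mul hz]
  rfl
end
end
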